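/- Let γ ∈ (0,1), let m ≥ 1, let r = ⌈log₂(2m+4)⌉ and s = ⌈√(2/γ)⌉. Let v_1, …, v_m, v_b, v_t, v' ∈ ℝ^d each of Euclidean norm at most 1, and define the polynomial p : ℝ^d → ℝ by p(x) = m + 5/2 − Σ_{i=1}^m (T_s(1 − ⟨v_i, x⟩))^r − (T_s(1 − ⟨x − v_b, v'⟩/2))^r − (T_s(1 − ⟨v_t − x, v'⟩/2))^r, where T_s is the s-th Chebyshev polynomial of the first kind. Then ‖p‖ ≤ (9/2)·(420 r s)^{r s / 2}. -/

import Mathlib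

open Finset RealInnerProductSpace

/-- The coefficient norm `‖p‖ = sqrt (Σ_α c_α²)` of a multivariate polynomial. -/
noncomputable def mvNorm {d : ℕ} (p : MvPolynomial (Fin d) ℝ) : ℝ :=
  Real.sqrt (∑ α ∈ p.support, (MvPolynomial.coeff α p) ^ 2)

/-- The multivariate polynomial `x ↦ ⟨v, x⟩`. -/
noncomputable def innerPoly {d : ℕ} (v : EuclideanSpace ℝ (Fin d)) :
    MvPolynomial (Fin d) ℝ :=
  ∑ i, MvPolynomial.C (v i) * MvPolynomial.X i

/-!
Every Chebyshev term has the form `F(⟨w, x⟩)` with `‖w‖ ≤ 1` and `F = T_s(a t + b)^r`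
a univariate polynomial of degree `≤ rs` with `|a| + |b| ≤ 2`. Expanding in powers of
`⟨w, x⟩`, the multinomial theorem gives `‖⟨w, x⟩^j‖² ≤ j! ‖w‖^{2j}`, because every
multinomial coefficient of order `j` is at most `j!`. So `‖F(⟨w, x⟩)‖` is at most
`√((rs)!)` times the ℓ¹-norm of the coefficients of `F`; that norm is submultiplicative,
and the recursion `T_{n+2} = 2 t T_{n+1} - T_n` bounds it by `5^{rs}`. Adding up the
`m + 2` terms and using `2m + 4 ≤ 2^r` and `(rs)! ≤ (rs)^{rs}` gives the claim.
-/

open scoped Nat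

section MvNorm

open MvPolynomial

variable {d : ℕ}

lemma mvNorm_eq_norm_toLp {p : MvPolynomial (Fin d) ℝ} {S : Finset (Fin d →₀ ℕ)}
    (h : p.support ⊆ S) :
    mvNorm p = ‖(WithLp.toLp 2 fun α : S => coeff α p : EuclideanSpace ℝ S)‖ := by
  rw [EuclideanSpace.norm_eq, mvNorm]
  simp only [Real.norm_eq_abs, sq_abs]
  rw [Finset.sum_coe_sort S (fun α => coeff α p ^ 2)]
  refine congrArg _ (Finset.sum_subset h fun α _ hα => ?_)
  rw [notMem_support_iff.mp hα, sq, zero_mul]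

lemma mvNorm_add_le (p q : MvPolynomial (Fin d) ℝ) :
    mvNorm (p + q) ≤ mvNorm p + mvNorm q := by
  classical
  rw [mvNorm_eq_norm_toLp support_add,
    mvNorm_eq_norm_toLp (Finset.subset_union_left (s₂ := q.support)),
    mvNorm_eq_norm_toLp (Finset.subset_union_right (s₁ := p.support))]
  simp only [coeff_add]
  exact (norm_add_le _ _).trans_eq' (congrArg norm (WithLp.toLp_add 2 _ _))

lemma mvNorm_smul (a : ℝ) (p : MvPolynomial (Fin d) ℝ) :
    mvNorm (a • p) = |a| * mvNorm p := by
  rw [mvNorm_eq_norm_toLp support_smul, mvNorm_eq_norm_toLp subset_rfl,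
    ← Real.norm_eq_abs, ← norm_smul]
  simp only [coeff_smul]
  rfl

lemma mvNorm_sub_le (p q : MvPolynomial (Fin d) ℝ) :
    mvNorm (p - q) ≤ mvNorm p + mvNorm q := by
  have h := mvNorm_add_le p ((-1 : ℝ) • q)
  rwa [mvNorm_smul, abs_neg, abs_one, one_mul, neg_one_smul, ← sub_eq_add_neg] at h

lemma mvNorm_sum_le {ι : Type*} (t : Finset ι) (f : ι → MvPolynomial (Fin d) ℝ) :
    mvNorm (∑ i ∈ t, f i) ≤ ∑ i ∈ t, mvNorm (f i) :=
  Finset.le_sum_of_subadditive mvNorm (by simp [mvNorm]) mvNorm_add_le t f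

lemma mvNorm_C (a : ℝ) : mvNorm (C a : MvPolynomial (Fin d) ℝ) = |a| := by
  rw [← mul_one (C a), ← smul_eq_C_mul, mvNorm_smul]
  simp [mvNorm]

lemma mvNorm_C_sub_sum_sub_sub_le {ι : Type*} (t : Finset ι) (c : ℝ)
    (f : ι → MvPolynomial (Fin d) ℝ) (g h : MvPolynomial (Fin d) ℝ) :
    mvNorm (C c - ∑ i ∈ t, f i - g - h)
      ≤ |c| + ∑ i ∈ t, mvNorm (f i) + mvNorm g + mvNorm h := by
  calc mvNorm (C c - ∑ i ∈ t, f i - g - h)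
      ≤ mvNorm (C c) + mvNorm (∑ i ∈ t, f i) + mvNorm g + mvNorm h := by
        grw [mvNorm_sub_le, mvNorm_sub_le, mvNorm_sub_le]
    _ ≤ |c| + ∑ i ∈ t, mvNorm (f i) + mvNorm g + mvNorm h := by
        rw [mvNorm_C]; grw [mvNorm_sum_le]

end MvNorm

lemma Finsupp.multinomial_le_factorial {ι : Type*} (α : ι →₀ ℕ) :
    α.multinomial ≤ (α.sum fun _ => id)! :=
  Nat.div_le_self _ _

section Multinomial

open MvPolynomial

variable {σ : Type*} [Fintype σ]

lemma MvPolynomial.coeff_sum_smul_X_pow_nonneg {c : σ → ℝ} (hc : ∀ i, 0 ≤ c i)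
    (α : σ →₀ ℕ) (j : ℕ) : 0 ≤ coeff α ((∑ i, c i • X i : MvPolynomial σ ℝ) ^ j) := by
  rw [coeff_linearCombination_X_pow_of_fintype]
  split_ifs
  · exact mul_nonneg (Nat.cast_nonneg _) (Finset.prod_nonneg fun i _ => pow_nonneg (hc i) _)
  · exact le_rfl

lemma MvPolynomial.sq_coeff_sum_smul_X_pow_le (a : σ → ℝ) (α : σ →₀ ℕ) (j : ℕ) :
    coeff α ((∑ i, a i • X i : MvPolynomial σ ℝ) ^ j) ^ 2
      ≤ j ! * coeff α ((∑ i, (a i ^ 2) • X i : MvPolynomial σ ℝ) ^ j) := by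
  rw [coeff_linearCombination_X_pow_of_fintype, coeff_linearCombination_X_pow_of_fintype]
  split_ifs with hα
  · have hmult : (α.multinomial : ℝ) ≤ j ! := by
      exact_mod_cast hα ▸ α.multinomial_le_factorial
    have hprod : α.prod (fun i m => (a i ^ 2) ^ m) = (α.prod fun i m => a i ^ m) ^ 2 := by
      rw [Finsupp.prod, Finsupp.prod, ← Finset.prod_pow]
      exact Finset.prod_congr rfl fun i _ => pow_right_comm _ _ _
    set P := α.prod fun i m => a i ^ m
    calc ((α.multinomial : ℝ) * P) ^ 2 = α.multinomial * (α.multinomial * P ^ 2) := by ring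
      _ ≤ j ! * (α.multinomial * α.prod fun i m => (a i ^ 2) ^ m) := by
        rw [hprod]; gcongr
  · simp

end Multinomial

section InnerPoly

open MvPolynomial

variable {d : ℕ}

lemma mvNorm_innerPoly_pow_le (v : EuclideanSpace ℝ (Fin d)) (j : ℕ) :
    mvNorm (innerPoly v ^ j) ≤ √(j ! : ℝ) * ‖v‖ ^ j := by
  -- `j! • q` dominates the squared coefficients, and the coefficients of `q` sum to `‖v‖^{2j}`.
  set q : MvPolynomial (Fin d) ℝ := (∑ i, (v i ^ 2) • X i) ^ j
  have hp : innerPoly v = ∑ i, v i • X i := by simp only [innerPoly, smul_eq_C_mul]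
  have hcoeff α : coeff α (innerPoly v ^ j) ^ 2 ≤ j ! * coeff α q :=
    hp ▸ sq_coeff_sum_smul_X_pow_le (fun i => v i) α j
  have hq α : 0 ≤ coeff α q := coeff_sum_smul_X_pow_nonneg (fun i => sq_nonneg (v i)) α j
  have hsupp : (innerPoly v ^ j).support ⊆ q.support := fun α hα => by
    rw [mem_support_iff] at hα ⊢
    intro h0
    have h := hcoeff α
    rw [h0, mul_zero] at h
    exact hα (pow_eq_zero_iff two_ne_zero |>.mp (le_antisymm h (sq_nonneg _)))
  have heval : ∑ α ∈ q.support, coeff α q = (‖v‖ ^ j) ^ 2 := by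
    have h : eval 1 q = ∑ α ∈ q.support, coeff α q := by simp [eval_eq]
    simp only [← h, q, map_pow, map_sum, smul_eval, eval_X, Pi.one_apply, mul_one]
    rw [← pow_mul, mul_comm, pow_mul, EuclideanSpace.norm_sq_eq]
    simp only [Real.norm_eq_abs, sq_abs]
  calc mvNorm (innerPoly v ^ j)
      ≤ √(∑ α ∈ q.support, j ! * coeff α q) :=
        Real.sqrt_le_sqrt ((Finset.sum_le_sum fun α _ => hcoeff α).trans
          (Finset.sum_le_sum_of_subset_of_nonneg hsupp fun α _ _ => by have := hq α; positivity))
    _ = √(j ! : ℝ) * ‖v‖ ^ j := by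
        rw [← Finset.mul_sum, heval, Real.sqrt_mul (by positivity), Real.sqrt_sq (by positivity)]

end InnerPoly

section SumAbsCoeff

open Polynomial

noncomputable def sumAbsCoeff (F : ℝ[X]) : ℝ := ∑ j ∈ F.support, |F.coeff j|

lemma sumAbsCoeff_eq_sum_of_support_subset {F : ℝ[X]} {S : Finset ℕ} (h : F.support ⊆ S) :
    sumAbsCoeff F = ∑ j ∈ S, |F.coeff j| :=
  Finset.sum_subset h fun j _ hj => by rw [notMem_support_iff.mp hj, abs_zero]

lemma sumAbsCoeff_nonneg (F : ℝ[X]) : 0 ≤ sumAbsCoeff F :=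
  Finset.sum_nonneg fun _ _ => abs_nonneg _

lemma sumAbsCoeff_add_le (F G : ℝ[X]) :
    sumAbsCoeff (F + G) ≤ sumAbsCoeff F + sumAbsCoeff G := by
  classical
  rw [sumAbsCoeff_eq_sum_of_support_subset support_add,
    sumAbsCoeff_eq_sum_of_support_subset (Finset.subset_union_left (s₂ := G.support)),
    sumAbsCoeff_eq_sum_of_support_subset (Finset.subset_union_right (s₁ := F.support)),
    ← Finset.sum_add_distrib]
  exact Finset.sum_le_sum fun j _ => by rw [coeff_add]; exact abs_add_le _ _

lemma sumAbsCoeff_sub_le (F G : ℝ[X]) :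
    sumAbsCoeff (F - G) ≤ sumAbsCoeff F + sumAbsCoeff G := by
  have h : sumAbsCoeff (-G) = sumAbsCoeff G := by simp [sumAbsCoeff]
  simpa only [sub_eq_add_neg, h] using sumAbsCoeff_add_le F (-G)

lemma sumAbsCoeff_sum_le {ι : Type*} (t : Finset ι) (f : ι → ℝ[X]) :
    sumAbsCoeff (∑ i ∈ t, f i) ≤ ∑ i ∈ t, sumAbsCoeff (f i) :=
  Finset.le_sum_of_subadditive sumAbsCoeff (by simp [sumAbsCoeff]) sumAbsCoeff_add_le t f

lemma sumAbsCoeff_monomial (n : ℕ) (a : ℝ) : sumAbsCoeff (monomial n a) = |a| := by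
  rw [sumAbsCoeff_eq_sum_of_support_subset (support_monomial_subset n a), Finset.sum_singleton,
    coeff_monomial_same]

lemma sumAbsCoeff_C (a : ℝ) : sumAbsCoeff (C a) = |a| := by
  rw [← monomial_zero_left, sumAbsCoeff_monomial]

lemma sumAbsCoeff_mul_le (F G : ℝ[X]) :
    sumAbsCoeff (F * G) ≤ sumAbsCoeff F * sumAbsCoeff G := by
  conv_lhs => rw [F.as_sum_support, G.as_sum_support, Finset.sum_mul_sum]
  refine (sumAbsCoeff_sum_le _ _).trans ?_
  rw [sumAbsCoeff, sumAbsCoeff, Finset.sum_mul_sum]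
  refine Finset.sum_le_sum fun i _ => (sumAbsCoeff_sum_le _ _).trans_eq ?_
  simp only [monomial_mul_monomial, sumAbsCoeff_monomial, abs_mul]

lemma sumAbsCoeff_pow_le (F : ℝ[X]) (n : ℕ) : sumAbsCoeff (F ^ n) ≤ sumAbsCoeff F ^ n := by
  induction n with
  | zero => simpa using (sumAbsCoeff_C 1).le
  | succ n ih =>
    rw [pow_succ, pow_succ]
    exact (sumAbsCoeff_mul_le _ _).trans (by gcongr; exact sumAbsCoeff_nonneg _)

lemma sumAbsCoeff_chebyshev_T_comp_le (G : ℝ[X]) (n : ℕ) :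
    sumAbsCoeff ((Chebyshev.T ℝ n).comp G) ≤ (2 * sumAbsCoeff G + 1) ^ n := by
  have hG := sumAbsCoeff_nonneg G
  induction n using Nat.twoStepInduction with
  | zero => simpa using (sumAbsCoeff_C 1).le
  | one => simp only [Nat.cast_one, Chebyshev.T_one, X_comp, pow_one]; linarith
  | more n ih₀ ih₁ =>
    set c := 2 * sumAbsCoeff G + 1
    have hT : (Chebyshev.T ℝ (n + 2 : ℕ)).comp G
        = C 2 * G * (Chebyshev.T ℝ (n + 1 : ℕ)).comp G - (Chebyshev.T ℝ n).comp G := by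
      rw [Nat.cast_add, Nat.cast_two, Chebyshev.T_add_two, ← Nat.cast_add_one]
      simp only [sub_comp, mul_comp, X_comp, ofNat_comp, C_ofNat, Nat.cast_ofNat]
    calc sumAbsCoeff ((Chebyshev.T ℝ (n + 2 : ℕ)).comp G)
        ≤ 2 * sumAbsCoeff G * c ^ (n + 1) + c ^ n := by
          rw [hT]
          grw [sumAbsCoeff_sub_le, sumAbsCoeff_mul_le, sumAbsCoeff_mul_le, sumAbsCoeff_C,
            abs_two, ih₀, ih₁]
          exact sumAbsCoeff_nonneg _
      _ ≤ c ^ (n + 2) := by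
          have h : 0 ≤ c ^ n * (c - 1) := mul_nonneg (by positivity) (by linarith)
          rw [show 2 * sumAbsCoeff G = c - 1 by ring]
          linear_combination h

end SumAbsCoeff

section ChebyshevTerm

open Polynomial

variable {d : ℕ}

lemma mvNorm_aeval_innerPoly_le {w : EuclideanSpace ℝ (Fin d)} (hw : ‖w‖ ≤ 1) (F : ℝ[X]) :
    mvNorm (aeval (innerPoly w) F) ≤ sumAbsCoeff F * √(F.natDegree ! : ℝ) := by
  rw [aeval_eq_sum_range, sumAbsCoeff_eq_sum_of_support_subset supp_subset_range_natDegree_succ,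
    Finset.sum_mul]
  refine (mvNorm_sum_le _ _).trans (Finset.sum_le_sum fun j hj => ?_)
  rw [mvNorm_smul]
  gcongr
  calc mvNorm (innerPoly w ^ j) ≤ √(j ! : ℝ) * ‖w‖ ^ j := mvNorm_innerPoly_pow_le w j
    _ ≤ √(j ! : ℝ) * 1 := by gcongr; exact pow_le_one₀ (norm_nonneg w) hw
    _ ≤ √(F.natDegree ! : ℝ) := by
        rw [mul_one]
        gcongr
        exact Finset.mem_range_succ_iff.mp hj

lemma mvNorm_aeval_affine_chebyshev_T_pow_le {w : EuclideanSpace ℝ (Fin d)} (hw : ‖w‖ ≤ 1)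
    {a b c : ℝ} (hab : |a| + |b| ≤ c) (s r : ℕ) :
    mvNorm (aeval (MvPolynomial.C a * innerPoly w + MvPolynomial.C b) (Chebyshev.T ℝ s) ^ r)
      ≤ (2 * c + 1) ^ (r * s) * √((r * s) ! : ℝ) := by
  set G : ℝ[X] := C a * X + C b
  have hG : sumAbsCoeff G ≤ c := (sumAbsCoeff_add_le _ _).trans
    (by rwa [C_mul_X_eq_monomial, sumAbsCoeff_monomial, sumAbsCoeff_C])
  have hdeg : (((Chebyshev.T ℝ s).comp G) ^ r).natDegree ≤ r * s := by
    refine natDegree_pow_le.trans (Nat.mul_le_mul_left r (natDegree_comp_le.trans ?_))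
    rw [Chebyshev.natDegree_T, Int.natAbs_natCast]
    exact (Nat.mul_le_mul_left s natDegree_linear_le).trans_eq (mul_one s)
  have hcoeff : sumAbsCoeff (((Chebyshev.T ℝ s).comp G) ^ r) ≤ (2 * c + 1) ^ (r * s) :=
    calc sumAbsCoeff (((Chebyshev.T ℝ s).comp G) ^ r)
        ≤ ((2 * sumAbsCoeff G + 1) ^ s) ^ r := by
          grw [sumAbsCoeff_pow_le, sumAbsCoeff_chebyshev_T_comp_le]
          exact sumAbsCoeff_nonneg _
      _ ≤ (2 * c + 1) ^ (r * s) := by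
          rw [← pow_mul, mul_comm s r]
          have := sumAbsCoeff_nonneg G
          gcongr
  have heq : aeval (MvPolynomial.C a * innerPoly w + MvPolynomial.C b) (Chebyshev.T ℝ s) ^ r
      = aeval (innerPoly w) (((Chebyshev.T ℝ s).comp G) ^ r) := by
    rw [map_pow, aeval_comp]
    simp [G, MvPolynomial.algebraMap_eq]
  rw [heq]
  have hc : 0 ≤ c := (add_nonneg (abs_nonneg a) (abs_nonneg b)).trans hab
  grw [mvNorm_aeval_innerPoly_le hw, hcoeff, hdeg]

end ChebyshevTerm

lemma ten_pow_mul_sqrt_factorial_le (n : ℕ) :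
    10 ^ n * √(n ! : ℝ) ≤ (420 * n) ^ ((n : ℝ) / 2) := by
  rw [Real.rpow_div_two_eq_sqrt _ (by positivity), Real.rpow_natCast,
    Real.sqrt_mul (by norm_num), mul_pow]
  gcongr
  · exact Real.le_sqrt_of_sq_le (by norm_num)
  · rw [Real.sqrt_le_iff, ← pow_right_comm, Real.sq_sqrt (Nat.cast_nonneg n)]
    exact ⟨by positivity, by exact_mod_cast Nat.factorial_le_pow n⟩

lemma add_add_mul_le_rpow {m n : ℕ} (h : 2 * m + 4 ≤ 2 ^ n) :
    (m : ℝ) + 5 / 2 + (m + 2) * (5 ^ n * √(n ! : ℝ)) ≤ 9 / 2 * (420 * n) ^ ((n : ℝ) / 2) := by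
  have hm : (m : ℝ) + 2 ≤ 2 ^ n / 2 := by
    have : (2 * m + 4 : ℝ) ≤ 2 ^ n := by exact_mod_cast h
    linarith
  have h1 : 1 ≤ 5 ^ n * √(n ! : ℝ) :=
    one_le_mul_of_one_le_of_one_le (one_le_pow₀ (by norm_num))
      (Real.one_le_sqrt.mpr (by exact_mod_cast n.factorial_pos))
  have h10 : (10 : ℝ) ^ n * √(n ! : ℝ) = 2 ^ n * (5 ^ n * √(n ! : ℝ)) := by
    rw [← mul_assoc, ← mul_pow]; norm_num
  have := ten_pow_mul_sqrt_factorial_le n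
  have : (0 : ℝ) ≤ 2 ^ n := by positivity
  nlinarith

lemma two_mul_add_four_le_two_pow_mul {m r s : ℕ} (hr : r = ⌈Real.logb 2 (2 * m + 4)⌉₊)
    (hs : 1 ≤ s) : 2 * m + 4 ≤ 2 ^ (r * s) := by
  have hlog : Real.logb 2 (2 * m + 4) ≤ r := hr ▸ Nat.le_ceil _
  rw [Real.logb_le_iff_le_rpow one_lt_two (by positivity), Real.rpow_natCast] at hlog
  exact (show 2 * m + 4 ≤ 2 ^ r by exact_mod_cast hlog).trans
    (Nat.pow_le_pow_right two_pos (Nat.le_mul_of_pos_right r hs))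

open Polynomial

theorem sep_poly_mvNorm_le_general {d m : ℕ} (γ : ℝ)
    (hγ : γ ∈ Set.Ioo (0 : ℝ) 1)
    (r s : ℕ) (hr : r = ⌈Real.logb 2 (2 * m + 4)⌉₊) (hs : s = ⌈Real.sqrt (2 / γ)⌉₊)
    (v : Fin m → EuclideanSpace ℝ (Fin d)) (vb vt v' : EuclideanSpace ℝ (Fin d))
    (hv : ∀ i, ‖v i‖ ≤ 1) (hvb : ‖vb‖ ≤ 1) (hvt : ‖vt‖ ≤ 1) (hv' : ‖v'‖ ≤ 1) :
    mvNorm (MvPolynomial.C ((m : ℝ) + 5 / 2)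
        - ∑ i, (Polynomial.aeval (1 - innerPoly (v i))
            (Polynomial.Chebyshev.T ℝ (s : ℤ))) ^ r
        - (Polynomial.aeval
            (1 - MvPolynomial.C (2 : ℝ)⁻¹ * (innerPoly v' - MvPolynomial.C ⟪vb, v'⟫))
            (Polynomial.Chebyshev.T ℝ (s : ℤ))) ^ r
        - (Polynomial.aeval
            (1 - MvPolynomial.C (2 : ℝ)⁻¹ * (MvPolynomial.C ⟪vt, v'⟫ - innerPoly v'))
            (Polynomial.Chebyshev.T ℝ (s : ℤ))) ^ r)
      ≤ 9 / 2 * (420 * (r : ℝ) * (s : ℝ)) ^ (((r : ℝ) * (s : ℝ)) / 2) := by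
  have hs1 : 1 ≤ s := hs ▸ Nat.one_le_ceil_iff.mpr (Real.sqrt_pos.mpr (div_pos two_pos hγ.1))
  set K : ℝ := 5 ^ (r * s) * √((r * s) ! : ℝ)
  have hterm {w : EuclideanSpace ℝ (Fin d)} (hw : ‖w‖ ≤ 1) {a b : ℝ} (hab : |a| + |b| ≤ 2) :
      mvNorm (aeval (MvPolynomial.C a * innerPoly w + MvPolynomial.C b)
        (Chebyshev.T ℝ s) ^ r) ≤ K := by
    convert mvNorm_aeval_affine_chebyshev_T_pow_le hw hab s r using 2
    norm_num
  have hinner_bounds {u : EuclideanSpace ℝ (Fin d)} (hu : ‖u‖ ≤ 1) : -1 ≤ ⟪u, v'⟫ ∧ ⟪u, v'⟫ ≤ 1 :=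
    abs_le.mp ((abs_real_inner_le_norm u v').trans (mul_le_one₀ hu (norm_nonneg v') hv'))
  have hv_term i : mvNorm (aeval (1 - innerPoly (v i)) (Chebyshev.T ℝ s) ^ r) ≤ K := by
    convert hterm (hv i) (a := -1) (b := 1) (by norm_num) using 5
    simp only [map_neg, map_one]; ring
  have hvb_term : mvNorm (aeval (1 - MvPolynomial.C (2 : ℝ)⁻¹ *
      (innerPoly v' - MvPolynomial.C ⟪vb, v'⟫)) (Chebyshev.T ℝ s) ^ r) ≤ K := by
    obtain ⟨hlo, hhi⟩ := hinner_bounds hvb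
    convert hterm hv' (a := -2⁻¹) (b := 1 + 2⁻¹ * ⟪vb, v'⟫)
      (by rw [abs_neg, abs_of_pos (by norm_num), abs_of_nonneg (by linarith)]; linarith) using 5
    simp only [map_neg, map_add, map_mul, map_one]; ring
  have hvt_term : mvNorm (aeval (1 - MvPolynomial.C (2 : ℝ)⁻¹ *
      (MvPolynomial.C ⟪vt, v'⟫ - innerPoly v')) (Chebyshev.T ℝ s) ^ r) ≤ K := by
    obtain ⟨hlo, hhi⟩ := hinner_bounds hvt
    convert hterm hv' (a := 2⁻¹) (b := 1 - 2⁻¹ * ⟪vt, v'⟫)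
      (by rw [abs_of_pos (by norm_num), abs_of_nonneg (by linarith)]; linarith) using 5
    simp only [map_sub, map_mul, map_one]; ring
  grw [mvNorm_C_sub_sum_sub_sub_le, Finset.sum_le_sum fun i _ => hv_term i, hvb_term, hvt_term]
  have := add_add_mul_le_rpow (two_mul_add_four_le_two_pow_mul hr hs1)
  push_cast at this
  simp only [Finset.sum_const, Finset.card_univ, Fintype.card_fin, nsmul_eq_mul]
  rw [abs_of_nonneg (by positivity), mul_assoc 420]
  linarith

/-- With `r = ⌈log₂(2m+4)⌉`, `s = ⌈√(2/γ)⌉` and unit-norm vectors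
`v_1, …, v_m, v_b, v_t, v'`, the multivariate polynomial
`p(x) = m + 5/2 − Σ_i T_s(1 − ⟨v_i,x⟩)^r − T_s(1 − ⟨x−v_b,v'⟩/2)^r − T_s(1 − ⟨v_t−x,v'⟩/2)^r`
satisfies `‖p‖ ≤ (9/2)·(420 r s)^{r s / 2}`. -/
theorem sep_poly_mvNorm_le {d m : ℕ} (hm : 1 ≤ m) (γ : ℝ)
    (hγ : γ ∈ Set.Ioo (0 : ℝ) 1)
    (r s : ℕ) (hr : r = ⌈Real.logb 2 (2 * m + 4)⌉₊) (hs : s = ⌈Real.sqrt (2 / γ)⌉₊)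
    (v : Fin m → EuclideanSpace ℝ (Fin d)) (vb vt v' : EuclideanSpace ℝ (Fin d))
    (hv : ∀ i, ‖v i‖ ≤ 1) (hvb : ‖vb‖ ≤ 1) (hvt : ‖vt‖ ≤ 1) (hv' : ‖v'‖ ≤ 1) :
    mvNorm (MvPolynomial.C ((m : ℝ) + 5 / 2)
        - ∑ i, (Polynomial.aeval (1 - innerPoly (v i))
            (Polynomial.Chebyshev.T ℝ (s : ℤ))) ^ r
        - (Polynomial.aeval
            (1 - MvPolynomial.C (2 : ℝ)⁻¹ * (innerPoly v' - MvPolynomial.C ⟪vb, v'⟫))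
            (Polynomial.Chebyshev.T ℝ (s : ℤ))) ^ r
        - (Polynomial.aeval
            (1 - MvPolynomial.C (2 : ℝ)⁻¹ * (MvPolynomial.C ⟪vt, v'⟫ - innerPoly v'))
            (Polynomial.Chebyshev.T ℝ (s : ℤ))) ^ r)
      ≤ 9 / 2 * (420 * (r : ℝ) * (s : ℝ)) ^ (((r : ℝ) * (s : ℝ)) / 2) :=
  sep_poly_mvNorm_le_general γ hγ r s hr hs v vb vt v' hv hvb hvt hv'
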